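/- arXiv:2003.10588 — 3 statements merged into one kernel-verified Lean document; each statement's English description precedes it below -/
import Mathlib

section
/- Sketching error composes additively under pairwise-sum product: if (1−β)△A(t) ≤ △A'(t) ≤ △A(t) and (1−γ)△B(t) ≤ △B'(t) ≤ △B(t) for all t, then for D = A ⊓ B and D' = A' ⊓ B' we have (1−β−γ)·△D(t) ≤ △D'(t) ≤ △D(t) for all t ∈ ℝ. -/
/-- Finite multisets of reals, represented by their multiplicity function. -/
abbrev MSet := ℝ →₀ ℕ

/-- Pairwise-sum product: #(A ⊓ B)(e) = Σ_i #A(e−i)·#B(i). -/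
noncomputable def mprod (A B : MSet) : MSet :=
  A.sum fun a m => B.sum fun b n => Finsupp.single (a + b) (m * n)

/-- △A(t): the number of elements of `A` that are ≤ t, counted with multiplicity. -/
noncomputable def tri (A : MSet) (t : ℝ) : ℕ :=
  ∑ e ∈ A.support.filter (fun e => e ≤ t), A e

/-! The rank function of a pairwise-sum product is a nonnegative combination of shifted rank
functions of either factor, `△(A ⊓ B)(t) = Σ_b #B(b) · △A(t - b)`, so replacing one factor by a
`β`-sketch of it gives a `β`-sketch of the product. Sketching `A` and then `B` yields
`D' ≤ E ≤ D` with `E = A ⊓ B'`, and the errors add: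
`D - D' = (D - E) + (E - D') ≤ γ D + β E ≤ (β + γ) D` once `β ≥ 0`; a negative `β` forces `A = 0`. -/

lemma tri_eq_sum (A : MSet) (t : ℝ) : tri A t = A.sum fun e m => if e ≤ t then m else 0 := by
  rw [tri, Finset.sum_filter, Finsupp.sum]

lemma apply_le_tri (A : MSet) (a : ℝ) : A a ≤ tri A a := by
  by_cases ha : a ∈ A.support
  · exact Finset.single_le_sum (f := fun e => A e) (fun _ _ => Nat.zero_le _)
      (Finset.mem_filter.mpr ⟨ha, le_rfl⟩)
  · simp [Finsupp.notMem_support_iff.mp ha]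

lemma eq_zero_of_forall_tri_eq_zero {A : MSet} (h : ∀ t, tri A t = 0) : A = 0 := by
  ext a
  simpa [h a] using apply_le_tri A a

lemma mprod_comm (A B : MSet) : mprod A B = mprod B A := by
  rw [mprod, mprod, Finsupp.sum_comm]
  simp only [add_comm, mul_comm]

lemma tri_mprod (A B : MSet) (t : ℝ) :
    tri (mprod A B) t = B.sum fun b n => n * tri A (t - b) := by
  let count : ℝ → ℕ → ℕ := fun e m => if e ≤ t then m else 0
  have hzero : ∀ e, count e 0 = 0 := fun _ => ite_self 0
  have hadd : ∀ e m n, count e (m + n) = count e m + count e n := fun _ _ _ => by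
    simp only [count]; split_ifs <;> rfl
  rw [mprod_comm, mprod, tri_eq_sum, Finsupp.sum_sum_index hzero hadd]
  refine Finsupp.sum_congr fun b _ => ?_
  rw [Finsupp.sum_sum_index hzero hadd, tri_eq_sum, Finsupp.mul_sum]
  refine Finsupp.sum_congr fun a _ => ?_
  rw [Finsupp.sum_single_index (hzero _)]
  simp only [count, le_sub_iff_add_le, add_comm b]
  split_ifs <;> ring

def IsSketch (β : ℝ) (A' A : MSet) : Prop :=
  ∀ t : ℝ, (1 - β) * (tri A t : ℝ) ≤ (tri A' t : ℝ) ∧ (tri A' t : ℝ) ≤ (tri A t : ℝ)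

namespace IsSketch

variable {β γ : ℝ} {A A' D D' E : MSet}

lemma mprod_const (h : IsSketch β A' A) (B : MSet) : IsSketch β (mprod A' B) (mprod A B) := by
  intro t
  simp only [tri_mprod, Finsupp.sum, Nat.cast_sum, Nat.cast_mul, Finset.mul_sum]
  constructor
  all_goals refine Finset.sum_le_sum fun b _ => ?_
  · rw [mul_left_comm]
    exact mul_le_mul_of_nonneg_left (h (t - b)).1 (Nat.cast_nonneg _)
  · exact mul_le_mul_of_nonneg_left (h (t - b)).2 (Nat.cast_nonneg _)

lemma const_mprod (h : IsSketch β A' A) (B : MSet) : IsSketch β (mprod B A') (mprod B A) := by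
  rw [mprod_comm B, mprod_comm B]
  exact h.mprod_const B

lemma trans (h₁ : IsSketch β D' E) (h₂ : IsSketch γ E D) (hβ : 0 ≤ β) :
    IsSketch (β + γ) D' D := by
  intro t
  obtain ⟨h₁l, h₁u⟩ := h₁ t
  obtain ⟨h₂l, h₂u⟩ := h₂ t
  have := mul_le_mul_of_nonneg_left h₂u hβ
  constructor <;> linarith

lemma eq_zero_of_neg (h : IsSketch β A' A) (hβ : β < 0) : A' = 0 ∧ A = 0 := by
  have hA : ∀ t, tri A t = 0 := fun t => by
    obtain ⟨hl, hu⟩ := h t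
    have : (tri A t : ℝ) ≤ 0 := by nlinarith
    exact_mod_cast this.antisymm (Nat.cast_nonneg _)
  refine ⟨eq_zero_of_forall_tri_eq_zero fun t => ?_, eq_zero_of_forall_tri_eq_zero hA⟩
  exact Nat.le_zero.mp (hA t ▸ Nat.cast_le.mp (h t).2)

end IsSketch

theorem sketch_mprod_error (A B A' B' : MSet) (β γ : ℝ)
    (hA : ∀ t : ℝ, (1 - β) * (tri A t : ℝ) ≤ (tri A' t : ℝ) ∧ (tri A' t : ℝ) ≤ (tri A t : ℝ))
    (hB : ∀ t : ℝ, (1 - γ) * (tri B t : ℝ) ≤ (tri B' t : ℝ) ∧ (tri B' t : ℝ) ≤ (tri B t : ℝ)) :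
    ∀ t : ℝ,
      (1 - β - γ) * (tri (mprod A B) t : ℝ) ≤ (tri (mprod A' B') t : ℝ) ∧
        (tri (mprod A' B') t : ℝ) ≤ (tri (mprod A B) t : ℝ) := by
  rcases lt_or_ge β 0 with hβ | hβ
  · obtain ⟨rfl, rfl⟩ := IsSketch.eq_zero_of_neg hA hβ
    simp [mprod, tri]
  · have hD : IsSketch (β + γ) (mprod A' B') (mprod A B) :=
      (IsSketch.mprod_const hA B').trans (IsSketch.const_mprod hB A) hβ
    simpa only [IsSketch, sub_add_eq_sub_sub] using hD
end

section
/- The SumProd FAQ-AI(1) answer can be recovered from the derived-semiring query: for a commutative semiring (R, ⊕, ⊗, I₀, I₁), functions F_i : ℝ → R and g_i : ℝ → ℝ, and a finite set of rows J ⊆ ℝ^d, let 𝓕_i(x_i) = {(g_i(x_i), F_i(x_i))} if F_i(x_i) ≠ I₀ and ∅ otherwise, and let Q̂ = ⊔_{x∈J} ⊓_{i=1}^d 𝓕_i(x_i) in the derived semiring. Then ⊕_{e ≤ L} #Q̂(e) = ⊕_{x ∈ J : Σ_i g_i(x_i) ≤ L} ⊗_{i=1}^d F_i(x_i). -/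
/-!
Because `single e 0 = 0`, the case distinction in `liftF` is immaterial: every `𝓕_i(x_i)` is the
singleton `single (g_i x_i) (F_i x_i)`. Convolving singletons adds keys and multiplies values, so
each row contributes `single (∑ g_i x_i) (∏ F_i x_i)` to `Q̂`. Reading off the values at keys
`e ≤ L` is additive in `Q̂`, and on a single row it returns the row's product exactly when its key
is at most `L`.
-/

/-- The carrier of the derived semiring over a commutative semiring `R`. -/
abbrev DS (R : Type*) [CommSemiring R] := ℝ →₀ R

/-- The convolution product: #(A ⊓ B)(e) = ⊕_i #A(e−i) ⊗ #B(i). -/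
noncomputable def dprod {R : Type*} [CommSemiring R] (A B : DS R) : DS R :=
  A.sum fun a u => B.sum fun b v => Finsupp.single (a + b) (u * v)

/-- The multiplicative identity {(0, I₁)}. -/
noncomputable def done (R : Type*) [CommSemiring R] : DS R := Finsupp.single 0 1

/-- Iterated convolution product of a list. -/
noncomputable def dprodList {R : Type*} [CommSemiring R] (l : List (DS R)) : DS R :=
  l.foldr dprod (done R)

/-- 𝓕_i(x) = {(g_i(x), F_i(x))} if F_i(x) ≠ I₀, and ∅ otherwise. -/
noncomputable def liftF {R : Type*} [CommSemiring R] [DecidableEq R]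
    (g : ℝ → ℝ) (F : ℝ → R) (x : ℝ) : DS R :=
  if F x = 0 then 0 else Finsupp.single (g x) (F x)

section DerivedSemiring

variable {R : Type*} [CommSemiring R]

lemma liftF_eq_single [DecidableEq R] (g : ℝ → ℝ) (F : ℝ → R) (x : ℝ) :
    liftF g F x = Finsupp.single (g x) (F x) := by
  unfold liftF
  split_ifs with h <;> simp [h]

lemma dprod_single_single (a b : ℝ) (u v : R) :
    dprod (Finsupp.single a u) (Finsupp.single b v) = Finsupp.single (a + b) (u * v) := by
  unfold dprod
  rw [Finsupp.sum_single_index, Finsupp.sum_single_index] <;> simp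

lemma dprodList_ofFn_single {d : ℕ} (a : Fin d → ℝ) (b : Fin d → R) :
    dprodList (List.ofFn fun i => Finsupp.single (a i) (b i)) =
      Finsupp.single (∑ i, a i) (∏ i, b i) := by
  induction d with
  | zero => simp [dprodList, done]
  | succ n ih =>
    rw [List.ofFn_succ, dprodList, List.foldr_cons, ← dprodList, ih, dprod_single_single,
      Fin.sum_univ_succ, Fin.prod_univ_succ]

end DerivedSemiring

lemma Finsupp.sum_filter_support_finsetSum_single {ι α M : Type*} [AddCommMonoid M]
    (s : Finset ι) (a : ι → α) (b : ι → M) (P : α → Prop) [DecidablePred P] :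
    ∑ e ∈ (∑ x ∈ s, single (a x) (b x)).support.filter P, (∑ x ∈ s, single (a x) (b x)) e =
      ∑ x ∈ s.filter (fun x => P (a x)), b x := by
  rw [Finset.sum_filter, Finset.sum_filter]
  change (∑ x ∈ s, single (a x) (b x)).sum (fun e v => if P e then v else 0) = _
  rw [← Finsupp.sum_finsetSum_index (fun _ => by simp) (fun _ _ _ => by split_ifs <;> simp)]
  exact Finset.sum_congr rfl fun x _ => Finsupp.sum_single_index (by simp)

theorem sumprod_faqai_recovery (R : Type*) [CommSemiring R] [DecidableEq R]
    (d : ℕ) (J : Finset (Fin d → ℝ)) (F : Fin d → ℝ → R) (g : Fin d → ℝ → ℝ) (L : ℝ) :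
    (∑ e ∈ ((∑ x ∈ J, dprodList
          (List.ofFn fun i : Fin d => liftF (g i) (F i) (x i))).support.filter
        (fun e => e ≤ L)),
        (∑ x ∈ J, dprodList (List.ofFn fun i : Fin d => liftF (g i) (F i) (x i))) e) =
      ∑ x ∈ J.filter (fun x => (∑ i : Fin d, g i (x i)) ≤ L), ∏ i : Fin d, F i (x i) := by
  have row_eq_single : ∀ x : Fin d → ℝ,
      dprodList (List.ofFn fun i => liftF (g i) (F i) (x i)) =
        Finsupp.single (∑ i, g i (x i)) (∏ i, F i (x i)) := fun x => by
    simp only [liftF_eq_single]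
    exact dprodList_ofFn_single _ _
  simp only [row_eq_single]
  exact Finsupp.sum_filter_support_finsetSum_single J _ _ _
end

section
/- For the cross-product join J = {−w_1, w_1} × ⋯ × {−w_m, w_m} of m two-row tables (with all w_i positive integers), the number of rows x ∈ J satisfying both Σ_i x_i ≥ 0 and Σ_i (−x_i) ≥ 0 equals the number of sign vectors σ ∈ {−1,+1}^m with Σ_i σ_i w_i = 0, i.e., twice the number of ways (counting complements) to partition {w_1,…,w_m} into two parts of equal sum; in particular, this count is nonzero if and only if the Partition instance {w_1,…,w_m} has a solution. -/
open Finset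

section SignedSums

variable {ι K : Type*} [Fintype ι] [DecidableEq ι]

lemma mem_neg_pair_iff_div_mem_neg_one_one [Field K] [DecidableEq K] {a x : K} (ha : a ≠ 0) :
    x ∈ ({-a, a} : Finset K) ↔ x / a ∈ ({-1, 1} : Finset K) := by
  simp only [mem_insert, mem_singleton, div_eq_iff ha, neg_one_mul, one_mul]

/-- Rescaling coordinate `i` by `w i` identifies sign vectors with the rows of the join. -/
lemma card_filter_sum_eq_zero_eq_card_signs [Field K] [DecidableEq K] (w : ι → K)
    (hw : ∀ i, w i ≠ 0) :
    ((Fintype.piFinset fun i => ({-w i, w i} : Finset K)).filter (fun x => ∑ i, x i = 0)).card =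
      ((Fintype.piFinset fun _ => ({-1, 1} : Finset K)).filter
        (fun σ => ∑ i, σ i * w i = 0)).card := by
  refine card_nbij' (fun x i => x i / w i) (fun σ i => σ i * w i) ?_ ?_ ?_ ?_
  · intro x hx
    simp only [mem_coe, mem_filter, Fintype.mem_piFinset] at hx ⊢
    refine ⟨fun i => (mem_neg_pair_iff_div_mem_neg_one_one (hw i)).1 (hx.1 i), ?_⟩
    simpa only [div_mul_cancel₀ _ (hw _)] using hx.2
  · intro σ hσ
    simp only [mem_coe, mem_filter, Fintype.mem_piFinset] at hσ ⊢
    refine ⟨fun i => (mem_neg_pair_iff_div_mem_neg_one_one (hw i)).2 ?_, hσ.2⟩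
    simpa only [mul_div_cancel_right₀ _ (hw i)] using hσ.1 i
  · intro x _
    funext i
    exact div_mul_cancel₀ _ (hw i)
  · intro σ _
    funext i
    exact mul_div_cancel_right₀ _ (hw i)

lemma sum_ite_mem_neg [AddCommGroup K] (w : ι → K) (T : Finset ι) :
    ∑ i, (if i ∈ T then w i else -w i) = ∑ i ∈ T, w i - ∑ i ∈ Tᶜ, w i := by
  rw [sum_ite, sum_neg_distrib, ← sub_eq_add_neg]
  congr 2 <;> ext i <;> simp

/-- `T` is the set of indices carrying the sign `+`. -/
lemma exists_signed_sum_eq_zero_iff [AddCommGroup K] [DecidableEq K] (w : ι → K) :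
    (∃ x ∈ Fintype.piFinset fun i => ({-w i, w i} : Finset K), ∑ i, x i = 0) ↔
      ∃ T : Finset ι, ∑ i ∈ T, w i = ∑ i ∈ Tᶜ, w i := by
  constructor
  · rintro ⟨x, hx, hsum⟩
    refine ⟨univ.filter fun i => x i = w i, ?_⟩
    have hx_eq : x = fun i => if i ∈ univ.filter (fun i => x i = w i) then w i else -w i := by
      funext i
      have := Fintype.mem_piFinset.1 hx i
      simp only [mem_insert, mem_singleton] at this
      by_cases h : x i = w i <;> simp_all
    rw [hx_eq, sum_ite_mem_neg] at hsum
    exact sub_eq_zero.1 hsum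
  · rintro ⟨T, hT⟩
    refine ⟨fun i => if i ∈ T then w i else -w i, ?_, by rw [sum_ite_mem_neg, hT, sub_self]⟩
    refine Fintype.mem_piFinset.2 fun i => ?_
    split_ifs <;> simp

end SignedSums

theorem partition_reduction (m : ℕ) (w : Fin m → ℕ) (hw : ∀ i, 0 < w i) :
    -- the count of join rows satisfying both inequalities equals the number of
    -- sign vectors σ ∈ {−1,+1}^m with Σ_i σ_i w_i = 0
    ((Fintype.piFinset fun i : Fin m => ({-(w i : ℝ), (w i : ℝ)} : Finset ℝ)).filter
        (fun x => 0 ≤ (∑ i : Fin m, x i) ∧ 0 ≤ (∑ i : Fin m, -(x i)))).card =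
      ((Fintype.piFinset fun _ : Fin m => ({-1, 1} : Finset ℝ)).filter
        (fun σ => (∑ i : Fin m, σ i * (w i : ℝ)) = 0)).card ∧
    -- this count is nonzero iff the Partition instance has a solution
    (((Fintype.piFinset fun i : Fin m => ({-(w i : ℝ), (w i : ℝ)} : Finset ℝ)).filter
        (fun x => 0 ≤ (∑ i : Fin m, x i) ∧ 0 ≤ (∑ i : Fin m, -(x i)))).card ≠ 0 ↔
      ∃ T : Finset (Fin m), (∑ i ∈ T, w i) = ∑ i ∈ Tᶜ, w i) := by
  have two_inequalities_iff (x : Fin m → ℝ) :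
      0 ≤ ∑ i, x i ∧ 0 ≤ ∑ i, -x i ↔ ∑ i, x i = 0 := by
    rw [sum_neg_distrib, neg_nonneg, and_comm, ← le_antisymm_iff]
  simp only [two_inequalities_iff]
  refine ⟨card_filter_sum_eq_zero_eq_card_signs _ fun i => by exact_mod_cast (hw i).ne', ?_⟩
  rw [card_ne_zero, filter_nonempty_iff,
    exists_signed_sum_eq_zero_iff]
  simp only [← Nat.cast_sum, Nat.cast_inj]
end
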